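/- The function V₅ is not the sum of a nonnegative function and a positive definite function on ℤ/5ℤ: there do not exist f, g : ZMod 5 → ℝ such that f n ≥ 0 for all n, g is positive definite, and V₅ = f + g. -/

import Mathlib

open Finset
open scoped ComplexOrder

/-- The potential `V₅` on `ZMod 5`: `V₅ 0 = V₅ 2 = V₅ 3 = 1`, `V₅ 1 = V₅ 4 = -1`. -/
def V₅ : ZMod 5 → ℝ := fun n => if n = 1 ∨ n = 4 then -1 else 1

/-- A real-valued function on an additive abelian group is positive definite if all its
"quadratic forms" with complex coefficients are real and nonnegative. -/
def IsPosDef {G : Type*} [AddCommGroup G] (g : G → ℝ) : Prop :=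
  ∀ (N : ℕ) (x : Fin N → G) (c : Fin N → ℂ),
    0 ≤ ∑ i, ∑ j, c i * (starRingEnd ℂ) (c j) * (g (x i - x j) : ℂ)

/-!
A positive definite `g` on `ℤ/5ℤ` has nonnegative Fourier coefficients. Testing against the
constant vector gives `∑ g ≥ 0`, and testing against `n ↦ cos (2πn/5)`, whose values are
`1, (√5 - 1)/4, -(√5 + 1)/4`, gives `g 0 + cos (2π/5) (g 1 + g 4) + cos (4π/5) (g 2 + g 3) ≥ 0`.
For `g = V₅ - f` with `f ≥ 0` the first condition forces `∑ f ≤ 1`, so that `f 2 + f 3 ≤ 1`, while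
the second forces `f 0 + cos (2π/5) (f 1 + f 4) + cos (4π/5) (f 2 + f 3) ≤ 1 - √5`; the left side
is at least `cos (4π/5) = -(√5 + 1)/4 > 1 - √5`.
-/

theorem ZMod.sum_univ_five {M : Type*} [AddCommMonoid M] (f : ZMod 5 → M) :
    ∑ a, f a = f 0 + f 1 + f 2 + f 3 + f 4 :=
  Fin.sum_univ_five f

namespace IsPosDef

section Fintype

variable {G : Type*} [AddCommGroup G] [Fintype G] {g : G → ℝ}

theorem sum_sum_mul_nonneg (hg : IsPosDef g) (c : G → ℝ) :
    0 ≤ ∑ a, ∑ b, c a * c b * g (a - b) := by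
  let e := (Fintype.equivFin G).symm
  have h := hg _ e fun i => (c (e i) : ℂ)
  simp only [Complex.conj_ofReal] at h
  have reindex : ∑ i, ∑ j, (c (e i) : ℂ) * c (e j) * g (e i - e j) =
      ((∑ a, ∑ b, c a * c b * g (a - b) : ℝ) : ℂ) := by
    push_cast
    exact Fintype.sum_equiv e _ _ fun i => Fintype.sum_equiv e _ _ fun j => rfl
  rwa [reindex, Complex.zero_le_real] at h

theorem sum_nonneg (hg : IsPosDef g) : 0 ≤ ∑ n, g n := by
  have h := hg.sum_sum_mul_nonneg 1
  have sum_sub_left : ∀ a : G, ∑ b, g (a - b) = ∑ n, g n := fun a =>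
    Fintype.sum_equiv (Equiv.subLeft a) _ _ fun _ => rfl
  simp only [Pi.one_apply, one_mul, sum_sub_left, sum_const, card_univ, nsmul_eq_mul] at h
  exact nonneg_of_mul_nonneg_right h (by exact_mod_cast Fintype.card_pos)

end Fintype

theorem zmod_five_cos_sum_nonneg {g : ZMod 5 → ℝ} (hg : IsPosDef g) :
    0 ≤ g 0 + (√5 - 1) / 4 * (g 1 + g 4) - (√5 + 1) / 4 * (g 2 + g 3) := by
  let c : ZMod 5 → ℝ := fun n =>
    if n = 0 then 1 else if n = 1 ∨ n = 4 then (√5 - 1) / 4 else -(√5 + 1) / 4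
  have hc : c 0 = 1 ∧ c 1 = (√5 - 1) / 4 ∧ c 2 = -(√5 + 1) / 4 ∧ c 3 = -(√5 + 1) / 4 ∧
      c 4 = (√5 - 1) / 4 := by
    simp +decide [c]
  have quadForm : ∑ a, ∑ b, c a * c b * g (a - b) =
      5 / 2 * (g 0 + (√5 - 1) / 4 * (g 1 + g 4) - (√5 + 1) / 4 * (g 2 + g 3)) := by
    simp only [ZMod.sum_univ_five]
    reduce_mod_char
    simp only [hc]
    linear_combination (g 0 / 4 - (g 1 + g 4) / 16 - (g 2 + g 3) / 16) *
      Real.sq_sqrt (show (0 : ℝ) ≤ 5 by norm_num)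
  have := hg.sum_sum_mul_nonneg c
  rw [quadForm] at this
  linarith

end IsPosDef

theorem V₅_not_decomposable :
    ¬ ∃ f g : ZMod 5 → ℝ, (∀ n, 0 ≤ f n) ∧ IsPosDef g ∧ V₅ = f + g := by
  rintro ⟨f, g, hf, hg, hV⟩
  have hV₅ : V₅ 0 = 1 ∧ V₅ 1 = -1 ∧ V₅ 2 = 1 ∧ V₅ 3 = 1 ∧ V₅ 4 = -1 := by
    simp +decide [V₅]
  have hg_eq : ∀ n, g n = V₅ n - f n := fun n => by
    rw [hV, Pi.add_apply, add_sub_cancel_left]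
  have hsum := hg.sum_nonneg
  have hcos := hg.zmod_five_cos_sum_nonneg
  simp only [ZMod.sum_univ_five, hg_eq, hV₅] at hsum hcos
  have hf23 : f 2 + f 3 ≤ 1 := by linarith [hf 0, hf 1, hf 4]
  have h5 : 2 ≤ √5 := Real.le_sqrt_of_sq_le (by norm_num)
  linarith [hf 0, mul_nonneg (add_nonneg (hf 1) (hf 4)) (show 0 ≤ (√5 - 1) / 4 by linarith),
    mul_nonneg (show 0 ≤ 1 - (f 2 + f 3) by linarith) (show 0 ≤ (√5 + 1) / 4 by linarith)]
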